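/- A class β ∈ L satisfies β·β = −1 and β·K = −1 (where K = −3l + e_1 + ... + e_6) if and only if β is one of the 27 classes e_i (1 ≤ i ≤ 6), l − e_i − e_j (1 ≤ i < j ≤ 6), or 2l − Σ_{i≠j} e_i (1 ≤ j ≤ 6). In particular there are exactly 27 such classes. -/

import Mathlib

/-! Write `β = d l + ∑ bᵢ eᵢ`. The two conditions say `∑ bᵢ = 1 - 3d` and `∑ bᵢ² = d² + 1`, so
Cauchy–Schwarz `(∑ bᵢ)² ≤ 6 ∑ bᵢ²` gives `3d² - 6d - 5 ≤ 0`, i.e. `d ∈ {0, 1, 2}`. Taking `ε = 1` for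
`d = 0` and `ε = -1` otherwise, `∑ bᵢ (bᵢ - ε) = 0` is a sum of nonnegative integers, so every `bᵢ`
is `0` or `ε`, and the number of nonzero `bᵢ` is `1`, `2` or `5` respectively. -/

/-- The Picard lattice `L = ℤl ⊕ ℤe₁ ⊕ ⋯ ⊕ ℤe₆` of a cubic surface,
coordinates: index 0 is `l`, indices 1..6 are `e₁,…,e₆`. -/
abbrev PicL : Type := Fin 7 → ℤ

/-- The intersection form: `l·l = 1`, `eᵢ·eᵢ = -1`, other basis pairings `0`. -/
def inter (x y : PicL) : ℤ := x 0 * y 0 - ∑ i : Fin 6, x i.succ * y i.succ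

/-- The hyperplane class `l`. -/
def lvec : PicL := ![1, 0, 0, 0, 0, 0, 0]

/-- The exceptional class `e_{i+1}` for `i : Fin 6`. -/
def evec (i : Fin 6) : PicL := Pi.single i.succ 1

/-- The canonical class `K = -3l + e₁ + ⋯ + e₆`. -/
def Kvec : PicL := (-3 : ℤ) • lvec + ∑ i : Fin 6, evec i

/-- The anticanonical class `h = -K = 3l - e₁ - ⋯ - e₆`. -/
def hvec : PicL := (3 : ℤ) • lvec - ∑ i : Fin 6, evec i

/-- The set of the 27 classes of lines on the cubic surface:
`eᵢ`, `l - eᵢ - eⱼ` (i < j), and `2l - ∑_{i≠j} eᵢ`. -/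
def lineSet : Set PicL :=
  {β | (∃ i : Fin 6, β = evec i) ∨
       (∃ i j : Fin 6, i < j ∧ β = lvec - evec i - evec j) ∨
       (∃ j : Fin 6, β = (2 : ℤ) • lvec - (∑ i : Fin 6, evec i) + evec j)}

/-- The Weyl group generator `s₆`: the unique linear extension of
`e₁ ↦ l - e₂ - e₃`, `e₂ ↦ l - e₁ - e₃`, `e₃ ↦ l - e₁ - e₂`,
`l ↦ 2l - e₁ - e₂ - e₃`, `eᵢ ↦ eᵢ` for `i = 4,5,6`. -/
def s6 (x : PicL) : PicL :=
  ![2 * x 0 + x 1 + x 2 + x 3,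
    -(x 0) - x 2 - x 3,
    -(x 0) - x 1 - x 3,
    -(x 0) - x 1 - x 2,
    x 4, x 5, x 6]

/-- The classes `c₁,…,c₉ ∈ PicL` of the nine torus-invariant curves of the
nef toric surface `S₃⁰` under the identification `Pic(S₃⁰) ≅ Pic(S₃)`:
`c₁ = e₂ - e₅`, `c₂ = l - e₂ - e₃ - e₆`, `c₃ = e₆`, `c₄ = e₃ - e₆`,
`c₅ = l - e₁ - e₃ - e₄`, `c₆ = e₄`, `c₇ = e₁ - e₄`,
`c₈ = l - e₁ - e₂ - e₅`, `c₉ = e₅` (here indexed by `Fin 9`, `0`-based). -/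
def cvec : Fin 9 → PicL :=
  ![evec 1 - evec 4,
    lvec - evec 1 - evec 2 - evec 5,
    evec 5,
    evec 2 - evec 5,
    lvec - evec 0 - evec 2 - evec 3,
    evec 3,
    evec 0 - evec 3,
    lvec - evec 0 - evec 1 - evec 4,
    evec 4]

open Finset

lemma sum_smul_eq_smul_sum_filter {ι R M : Type*} [Fintype ι] [Semiring R] [DecidableEq R]
    [AddCommMonoid M] [Module R M] {b : ι → R} {c : R} (hb : ∀ i, b i = 0 ∨ b i = c)
    (v : ι → M) : ∑ i, b i • v i = c • ∑ i with b i = c, v i := by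
  rw [smul_sum, sum_filter]
  refine sum_congr rfl fun i _ => ?_
  by_cases hbc : b i = c
  · simp [hbc]
  · rw [if_neg hbc, (hb i).resolve_right hbc, zero_smul]

lemma eq_zero_or_eq_of_sum_mul_sub_eq_zero {ι : Type*} [Fintype ι] {b : ι → ℤ} {ε : ℤ}
    (hε : ε = 1 ∨ ε = -1) (h : ∑ i, b i * (b i - ε) = 0) (i : ι) : b i = 0 ∨ b i = ε := by
  have hnonneg : ∀ j, 0 ≤ b j * (b j - ε) := fun j => by
    rcases hε with rfl | rfl <;> obtain h | h | h := lt_trichotomy (b j) 0 <;> nlinarith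
  have := (sum_eq_zero_iff_of_nonneg fun j _ => hnonneg j).1 h i (mem_univ i)
  simpa [sub_eq_zero] using this

lemma inter_self (β : PicL) : inter β β = β 0 ^ 2 - ∑ i : Fin 6, β i.succ ^ 2 := by
  simp only [inter, sq]

lemma inter_Kvec (β : PicL) : inter β Kvec = -3 * β 0 - ∑ i : Fin 6, β i.succ := by
  have h0 : Kvec 0 = -3 := by decide
  have hs : ∀ i : Fin 6, Kvec i.succ = 1 := by decide
  simp [inter, h0, hs, mul_comm]

lemma eq_smul_lvec_add_sum_smul_evec (β : PicL) :
    β = β 0 • lvec + ∑ i, β i.succ • evec i := by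
  have h0 : lvec 0 = 1 := rfl
  have hs : ∀ i : Fin 6, lvec i.succ = 0 := by decide
  ext k
  induction k using Fin.cases with
  | zero => simp [h0, evec]
  | succ k => simp [hs, evec, Pi.single_apply]

lemma exists_eq_smul_lvec_add_smul_sum_evec {β : PicL} {ε : ℤ} (hε : ε = 1 ∨ ε = -1)
    (h : ∑ i : Fin 6, β i.succ ^ 2 = ε * ∑ i : Fin 6, β i.succ) :
    ∃ S : Finset (Fin 6),
      β = β 0 • lvec + ε • ∑ i ∈ S, evec i ∧ ∑ i : Fin 6, β i.succ = ε * #S := by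
  have hb := eq_zero_or_eq_of_sum_mul_sub_eq_zero hε (b := fun i : Fin 6 => β i.succ) (by
    simp only [mul_sub, sum_sub_distrib, ← sum_mul, ← sq, h]; ring)
  refine ⟨univ.filter fun i => β i.succ = ε, ?_, ?_⟩
  · conv_lhs => rw [eq_smul_lvec_add_sum_smul_evec β, sum_smul_eq_smul_sum_filter hb]
  · simpa using sum_smul_eq_smul_sum_filter hb (fun _ => (1 : ℤ))

lemma eq_zero_or_eq_one_or_eq_two_of_sums {d : ℤ} {b : Fin 6 → ℤ} (hs : ∑ i, b i = 1 - 3 * d)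
    (hq : ∑ i, b i ^ 2 = d ^ 2 + 1) : d = 0 ∨ d = 1 ∨ d = 2 := by
  have hcs := sq_sum_le_card_mul_sum_sq (s := univ) (f := b)
  rw [hs, hq, card_univ, Fintype.card_fin, Nat.cast_ofNat] at hcs
  have : 0 ≤ d := by nlinarith [sq_nonneg (d + 1)]
  have : d ≤ 2 := by nlinarith [sq_nonneg (d - 3)]
  omega

lemma sum_evec_mem_lineSet {S : Finset (Fin 6)} (hS : #S = 1) : ∑ i ∈ S, evec i ∈ lineSet := by
  obtain ⟨i, rfl⟩ := card_eq_one.1 hS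
  exact Or.inl ⟨i, sum_singleton _ _⟩

lemma lvec_sub_sum_evec_mem_lineSet {S : Finset (Fin 6)} (hS : #S = 2) :
    lvec - ∑ i ∈ S, evec i ∈ lineSet := by
  obtain ⟨i, j, hij, rfl⟩ := card_eq_two.1 hS
  rw [sum_pair hij]
  rcases hij.lt_or_gt with h | h
  · exact Or.inr (Or.inl ⟨i, j, h, by abel⟩)
  · exact Or.inr (Or.inl ⟨j, i, h, by abel⟩)

lemma two_smul_lvec_sub_sum_evec_mem_lineSet {S : Finset (Fin 6)} (hS : #S = 5) :
    (2 : ℤ) • lvec - ∑ i ∈ S, evec i ∈ lineSet := by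
  obtain ⟨j, hj⟩ := card_eq_one.1 (by rw [card_compl, hS]; rfl : #Sᶜ = 1)
  refine Or.inr (Or.inr ⟨j, ?_⟩)
  rw [← sum_compl_add_sum S, hj, sum_singleton]
  abel

lemma mem_lineSet_of_inter_eq {β : PicL} (hsq : inter β β = -1) (hK : inter β Kvec = -1) :
    β ∈ lineSet := by
  rw [inter_self] at hsq
  rw [inter_Kvec] at hK
  have hs : ∑ i : Fin 6, β i.succ = 1 - 3 * β 0 := by linarith
  have hq : ∑ i : Fin 6, β i.succ ^ 2 = β 0 ^ 2 + 1 := by linarith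
  rcases eq_zero_or_eq_one_or_eq_two_of_sums hs hq with hd | hd | hd
  · obtain ⟨S, hβ, hS⟩ := exists_eq_smul_lvec_add_smul_sum_evec (ε := 1) (by simp)
      (by rw [hq, hs, hd]; ring)
    rw [hβ, hd, zero_smul, zero_add, one_smul]
    exact sum_evec_mem_lineSet (by omega)
  · obtain ⟨S, hβ, hS⟩ := exists_eq_smul_lvec_add_smul_sum_evec (ε := -1) (by simp)
      (by rw [hq, hs, hd]; ring)
    rw [hβ, hd, one_smul, neg_one_smul, ← sub_eq_add_neg]
    exact lvec_sub_sum_evec_mem_lineSet (by omega)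
  · obtain ⟨S, hβ, hS⟩ := exists_eq_smul_lvec_add_smul_sum_evec (ε := -1) (by simp)
      (by rw [hq, hs, hd]; ring)
    rw [hβ, hd, neg_one_smul, ← sub_eq_add_neg]
    exact two_smul_lvec_sub_sum_evec_mem_lineSet (by omega)

lemma inter_eq_of_mem_lineSet {β : PicL} (hβ : β ∈ lineSet) :
    inter β β = -1 ∧ inter β Kvec = -1 := by
  rcases hβ with ⟨i, rfl⟩ | ⟨i, j, hij, rfl⟩ | ⟨j, rfl⟩
  · revert i; decide
  · revert i j; decide
  · revert j; decide

def lineFinset : Finset PicL :=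
  univ.image evec ∪ (univ.filter fun p : Fin 6 × Fin 6 => p.1 < p.2).image
      (fun p => lvec - evec p.1 - evec p.2) ∪
    univ.image fun j => (2 : ℤ) • lvec - ∑ i, evec i + evec j

lemma coe_lineFinset : (lineFinset : Set PicL) = lineSet := by
  ext β
  simp [lineSet, lineFinset, eq_comm]

/-- A class β satisfies β·β = -1 and β·K = -1 iff β is one of the 27 line
classes; in particular there are exactly 27 such classes. -/
theorem lines_characterization :
    (∀ β : PicL, (inter β β = -1 ∧ inter β Kvec = -1) ↔ β ∈ lineSet) ∧
      lineSet.ncard = 27 := by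
  refine ⟨fun β => ⟨fun h => mem_lineSet_of_inter_eq h.1 h.2, inter_eq_of_mem_lineSet⟩, ?_⟩
  rw [← coe_lineFinset, Set.ncard_coe_finset]
  decide
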